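/- Let (g,ρ,V,𝒱,B₀) be a standard pentad and let U, W be g-modules. Then the positive extension of U ⊕ W with respect to (g,ρ,V,𝒱,B₀) is isomorphic as an L(g,ρ,V,𝒱,B₀)-module to the direct sum of the positive extensions of U and W. -/

import Mathlib

/-- A **standard pentad** `(g, ρ, V, 𝒱, B₀)` in the abstract-dual formulation: a Lie algebra
`g` with a non-degenerate invariant bilinear form `B`, representations `ρ` on `V` and `ϱ`
on `W` (with `W` playing the role of the `g`-submodule `𝒱 ⊆ Hom(V, k)`, realized via the
non-degenerate pairing `pair`, so that `ϱ` is the canonical dual action), together with a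
Φ-map `Φ`. -/
structure PentadStruct (k g V W : Type*) [Field k] [LieRing g] [LieAlgebra k g]
    [AddCommGroup V] [Module k V] [AddCommGroup W] [Module k W] where
  ρ : g →ₗ[k] V →ₗ[k] V
  rep_ρ : ∀ a b : g, ρ ⁅a, b⁆ = ρ a ∘ₗ ρ b - ρ b ∘ₗ ρ a
  ϱ : g →ₗ[k] W →ₗ[k] W
  rep_ϱ : ∀ a b : g, ϱ ⁅a, b⁆ = ϱ a ∘ₗ ϱ b - ϱ b ∘ₗ ϱ a
  pair : V →ₗ[k] W →ₗ[k] k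
  pair_compat : ∀ (a : g) (v : V) (w : W), pair (ρ a v) w = - pair v (ϱ a w)
  pair_nondeg_left : ∀ v : V, (∀ w : W, pair v w = 0) → v = 0
  pair_nondeg_right : ∀ w : W, (∀ v : V, pair v w = 0) → w = 0
  B : g →ₗ[k] g →ₗ[k] k
  B_nondeg_left : ∀ a : g, (∀ b : g, B a b = 0) → a = 0
  B_nondeg_right : ∀ b : g, (∀ a : g, B a b = 0) → b = 0
  B_invariant : ∀ a b c : g, B ⁅a, b⁆ c = B a ⁅b, c⁆
  Φ : V →ₗ[k] W →ₗ[k] g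
  Φ_compat : ∀ (a : g) (v : V) (w : W), B a (Φ v w) = pair (ρ a v) w

/-- The graded Lie algebra `L(g, ρ, V, 𝒱, B₀) = ⊕ₙ Vₙ` associated with a standard pentad,
characterized by its defining properties: it is ℤ-graded, its degrees `0`, `1`, `-1` are the
images of `g`, `V`, `𝒱` (compatibly with the Lie structures and the Φ-map), the higher graded
pieces satisfy `V_{i+1} = [V₁, V_i]`, `V_{-i-1} = [V₋₁, V₋ᵢ]` for `i ≥ 1`, and elements of
`Vₙ`, `|n| ≥ 2`, are by construction (as homomorphisms) determined by their brackets with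
`V_{∓1}`. -/
structure AssocGradedLieAlgebra (k g V W : Type*) [Field k] [LieRing g] [LieAlgebra k g]
    [AddCommGroup V] [Module k V] [AddCommGroup W] [Module k W]
    (P : PentadStruct k g V W) (L : Type*) [LieRing L] [LieAlgebra k L] where
  grading : ℤ → Submodule k L
  isInternal : DirectSum.IsInternal grading
  lie_mem : ∀ (n m : ℤ), ∀ x ∈ grading n, ∀ y ∈ grading m, ⁅x, y⁆ ∈ grading (n + m)
  ιg : g →ₗ[k] L
  ιV : V →ₗ[k] L
  ιW : W →ₗ[k] L
  ιg_inj : Function.Injective ιg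
  ιV_inj : Function.Injective ιV
  ιW_inj : Function.Injective ιW
  ιg_range : LinearMap.range ιg = grading 0
  ιV_range : LinearMap.range ιV = grading 1
  ιW_range : LinearMap.range ιW = grading (-1)
  ιg_lie : ∀ a b : g, ιg ⁅a, b⁆ = ⁅ιg a, ιg b⁆
  lie_ιV : ∀ (a : g) (v : V), ⁅ιg a, ιV v⁆ = ιV (P.ρ a v)
  lie_ιW : ∀ (a : g) (w : W), ⁅ιg a, ιW w⁆ = ιW (P.ϱ a w)
  lie_Φ : ∀ (v : V) (w : W), ⁅ιV v, ιW w⁆ = ιg (P.Φ v w)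
  span_pos : ∀ i : ℤ, 1 ≤ i → grading (i + 1)
    = Submodule.span k {z : L | ∃ x ∈ grading 1, ∃ y ∈ grading i, z = ⁅x, y⁆}
  span_neg : ∀ i : ℤ, 1 ≤ i → grading (-i - 1)
    = Submodule.span k {z : L | ∃ x ∈ grading (-1), ∃ y ∈ grading (-i), z = ⁅x, y⁆}
  trans_pos : ∀ n : ℤ, 2 ≤ n → ∀ x ∈ grading n, (∀ y ∈ grading (-1), ⁅x, y⁆ = 0) → x = 0
  trans_neg : ∀ n : ℤ, 2 ≤ n → ∀ x ∈ grading (-n), (∀ y ∈ grading 1, ⁅x, y⁆ = 0) → x = 0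

/-- The **positive extension** `Ũ⁺ = ⊕_{m≥0} U⁺ₘ` of the `g`-module `U⁺₀` with respect to a
standard pentad, as an `L`-module: it is positively graded, transitive, and generated by
`V₀`, `V₁` and `U⁺₀` (i.e. `U⁺_{m+1} = V₁ · U⁺ₘ`). -/
structure PositiveExtension (k g V W : Type*) [Field k] [LieRing g] [LieAlgebra k g]
    [AddCommGroup V] [Module k V] [AddCommGroup W] [Module k W]
    (P : PentadStruct k g V W) (L : Type*) [LieRing L] [LieAlgebra k L]
    (A : AssocGradedLieAlgebra k g V W P L)
    (M : Type*) [AddCommGroup M] [Module k M] [LieRingModule L M] [LieModule k L M] where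
  grading : ℤ → Submodule k M
  isInternal : DirectSum.IsInternal grading
  zero_of_neg : ∀ n : ℤ, n < 0 → grading n = ⊥
  lie_mem : ∀ (n m : ℤ), ∀ x ∈ A.grading n, ∀ u ∈ grading m, ⁅x, u⁆ ∈ grading (n + m)
  transitive : ∀ m : ℤ, 1 ≤ m → ∀ u ∈ grading m,
    (∀ y ∈ A.grading (-1), ⁅y, u⁆ = 0) → u = 0
  span_step : ∀ m : ℤ, 0 ≤ m → grading (m + 1)
    = Submodule.span k {w : M | ∃ x ∈ A.grading 1, ∃ u ∈ grading m, w = ⁅x, u⁆}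

section ProdModule

variable {k L M N : Type*} [Field k] [LieRing L] [LieAlgebra k L]
  [AddCommGroup M] [Module k M] [LieRingModule L M]
  [AddCommGroup N] [Module k N] [LieRingModule L N]

/-- Direct sum (product) of two Lie modules, with componentwise action. -/
instance prodLieRingModule : LieRingModule L (M × N) where
  bracket x u := (⁅x, u.1⁆, ⁅x, u.2⁆)
  add_lie x y u := by ext <;> simp [add_lie]
  lie_add x u v := by ext <;> simp
  leibniz_lie x y u := by ext <;> simp

instance prodLieModule [LieModule k L M] [LieModule k L N] : LieModule k L (M × N) where
  smul_lie t x u := by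
    have h : ⁅t • x, u⁆ = (⁅t • x, u.1⁆, ⁅t • x, u.2⁆) := rfl
    have h' : ⁅x, u⁆ = (⁅x, u.1⁆, ⁅x, u.2⁆) := rfl
    rw [h, h']; ext <;> simp
  lie_smul t x u := by
    have h : ⁅x, t • u⁆ = (⁅x, (t • u).1⁆, ⁅x, (t • u).2⁆) := rfl
    have h' : ⁅x, u⁆ = (⁅x, u.1⁆, ⁅x, u.2⁆) := rfl
    rw [h, h']; ext <;> simp

end ProdModule

/-!
Positive extensions are unique: a `g`-equivariant isomorphism `e` between the degree-zero parts
of two positive extensions `M`, `N` extends to an isomorphism of `L`-modules. In degree `n` its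
graph is obtained from the graph of `e` by applying `L₁` `n` times. These graphs are stable
under `L₀`, and `L₋₁` lowers their degree; transitivity then shows, by induction on `n`, that
they meet `M × 0` and `0 × N` trivially, so they are graphs of isomorphisms `Mₙ ≃ Nₙ`. The sum of
these is `L`-equivariant because `L` is generated by `L₋₁`, `L₀` and `L₁`. Finally, the
componentwise direct sum of the positive extensions of `U` and `W'` is a positive extension of
`U ⊕ W'`.
-/
namespace Submodule

section Semiring

variable {R M N : Type*} [Semiring R] [AddCommMonoid M] [Module R M] [AddCommMonoid N]
  [Module R N]

def prodEquiv (p : Submodule R M) (q : Submodule R N) : p.prod q ≃ₗ[R] p × q where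
  toFun x := (⟨x.1.1, x.2.1⟩, ⟨x.1.2, x.2.2⟩)
  invFun y := ⟨(y.1, y.2), y.1.2, y.2.2⟩
  map_add' _ _ := rfl
  map_smul' _ _ := rfl
  left_inv _ := rfl
  right_inv _ := rfl

end Semiring

variable {R M N : Type*} [Ring R] [AddCommGroup M] [Module R M] [AddCommGroup N] [Module R N]

theorem bijective_submoduleMap_fst {S : Submodule R (M × N)}
    (hS : ∀ p ∈ S, p.1 = 0 ↔ p.2 = 0) :
    Function.Bijective ((LinearMap.fst R M N).submoduleMap S) := by
  refine ⟨(injective_iff_map_eq_zero _).2 fun p hp => ?_, LinearMap.submoduleMap_surjective _ _⟩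
  have h : (p : M × N).1 = 0 := congrArg Subtype.val hp
  exact Subtype.ext (Prod.ext h ((hS p p.2).1 h))

theorem bijective_submoduleMap_snd {S : Submodule R (M × N)}
    (hS : ∀ p ∈ S, p.1 = 0 ↔ p.2 = 0) :
    Function.Bijective ((LinearMap.snd R M N).submoduleMap S) := by
  refine ⟨(injective_iff_map_eq_zero _).2 fun p hp => ?_, LinearMap.submoduleMap_surjective _ _⟩
  have h : (p : M × N).2 = 0 := congrArg Subtype.val hp
  exact Subtype.ext (Prod.ext ((hS p p.2).2 h) h)

noncomputable def graphEquiv (S : Submodule R (M × N)) (hS : ∀ p ∈ S, p.1 = 0 ↔ p.2 = 0) :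
    S.map (LinearMap.fst R M N) ≃ₗ[R] S.map (LinearMap.snd R M N) :=
  (LinearEquiv.ofBijective _ (bijective_submoduleMap_fst hS)).symm.trans
    (LinearEquiv.ofBijective _ (bijective_submoduleMap_snd hS))

theorem graphEquiv_apply {S : Submodule R (M × N)} (hS : ∀ p ∈ S, p.1 = 0 ↔ p.2 = 0)
    {x : M} {y : N} (hxy : (x, y) ∈ S) (hx : x ∈ S.map (LinearMap.fst R M N)) :
    (S.graphEquiv hS ⟨x, hx⟩ : N) = y := by
  have hx' : (⟨x, hx⟩ : S.map (LinearMap.fst R M N)) =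
      (LinearMap.fst R M N).submoduleMap S ⟨(x, y), hxy⟩ := rfl
  rw [hx', graphEquiv, LinearEquiv.trans_apply, LinearEquiv.ofBijective_symm_apply_apply]
  rfl

end Submodule

namespace DirectSum.IsInternal

variable {R ι M N : Type*} [DecidableEq ι]

section Semiring

variable [Semiring R] [AddCommMonoid M] [Module R M] [AddCommMonoid N] [Module R N]
  {p : ι → Submodule R M} {q : ι → Submodule R N}

noncomputable def linearEquiv (hp : IsInternal p) (hq : IsInternal q)
    (f : ∀ i, p i ≃ₗ[R] q i) : M ≃ₗ[R] N :=
  (LinearEquiv.ofBijective (coeLinearMap p) hp).symm ≪≫ₗ DFinsupp.mapRange.linearEquiv f ≪≫ₗ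
    LinearEquiv.ofBijective (coeLinearMap q) hq

theorem linearEquiv_apply_coe (hp : IsInternal p) (hq : IsInternal q)
    (f : ∀ i, p i ≃ₗ[R] q i) (i : ι) (x : p i) : hp.linearEquiv hq f x = f i x := by
  have hx : (LinearEquiv.ofBijective (coeLinearMap p) hp).symm x = of (fun i => p i) i x :=
    (LinearEquiv.symm_apply_eq _).2 (coeLinearMap_of p i x).symm
  rw [linearEquiv, LinearEquiv.trans_apply, LinearEquiv.trans_apply, hx]
  show coeLinearMap q
    (DFinsupp.mapRange (fun i => f i) (fun i => map_zero (f i)) (DFinsupp.single i x)) = _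
  rw [DFinsupp.mapRange_single]
  exact coeLinearMap_of q i (f i x)

end Semiring

variable [Ring R] [AddCommGroup M] [Module R M] [AddCommGroup N] [Module R N]
  {p : ι → Submodule R M} {q : ι → Submodule R N}

theorem submodule_prod (hp : IsInternal p) (hq : IsInternal q) :
    IsInternal fun i => (p i).prod (q i) := by
  rw [isInternal_submodule_iff_iSupIndep_and_iSup_eq_top] at hp hq ⊢
  refine ⟨fun i => ?_, ?_⟩
  · have hle : ⨆ (j) (_ : j ≠ i), (p j).prod (q j) ≤
        (⨆ (j) (_ : j ≠ i), p j).prod (⨆ (j) (_ : j ≠ i), q j) :=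
      iSup₂_le fun j hj => Submodule.prod_mono (le_iSup₂ (f := fun j _ => p j) j hj)
        (le_iSup₂ (f := fun j _ => q j) j hj)
    refine Disjoint.mono_right hle (Submodule.disjoint_def.2 ?_)
    rintro x ⟨hx₁, hx₂⟩ ⟨hy₁, hy₂⟩
    exact Prod.ext (Submodule.disjoint_def.1 (hp.1 i) _ hx₁ hy₁)
      (Submodule.disjoint_def.1 (hq.1 i) _ hx₂ hy₂)
  · have hl : (⨆ i, p i).prod ⊥ ≤ ⨆ i, (p i).prod (q i) := by
      rw [← Submodule.map_inl, Submodule.map_iSup]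
      exact iSup_mono fun i => (Submodule.map_inl _).trans_le (Submodule.prod_mono le_rfl bot_le)
    have hr : (⊥ : Submodule R M).prod (⨆ i, q i) ≤ ⨆ i, (p i).prod (q i) := by
      rw [← Submodule.map_inr, Submodule.map_iSup]
      exact iSup_mono fun i => (Submodule.map_inr _).trans_le (Submodule.prod_mono bot_le le_rfl)
    rw [eq_top_iff, ← Submodule.prod_top, ← hp.2, ← hq.2]
    calc (⨆ i, p i).prod (⨆ i, q i) = (⨆ i, p i).prod ⊥ ⊔ (⊥ : Submodule R M).prod (⨆ i, q i) := by
          simp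
      _ ≤ _ := sup_le hl hr

end DirectSum.IsInternal

section LieModule

variable {k L M N : Type*} [CommRing k] [LieRing L] [LieAlgebra k L]
  [AddCommGroup M] [Module k M] [LieRingModule L M]
  [AddCommGroup N] [Module k N] [LieRingModule L N]

theorem Submodule.map_span_lie (X : Submodule k L) (S : Submodule k M) (f : M →ₗ[k] N)
    (hf : ∀ (x : L) (u : M), f ⁅x, u⁆ = ⁅x, f u⁆) :
    (span k {w | ∃ x ∈ X, ∃ u ∈ S, w = ⁅x, u⁆}).map f
      = span k {w | ∃ x ∈ X, ∃ v ∈ S.map f, w = ⁅x, v⁆} := by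
  rw [map_span]
  congr 1
  ext w
  constructor
  · rintro ⟨_, ⟨x, hx, u, hu, rfl⟩, rfl⟩
    exact ⟨x, hx, f u, mem_map_of_mem hu, hf x u⟩
  · rintro ⟨x, hx, _, ⟨u, hu, rfl⟩, rfl⟩
    exact ⟨⁅x, u⁆, ⟨x, hx, u, hu, rfl⟩, hf x u⟩

variable [LieModule k L M]

theorem Submodule.lie_mem_of_mem_span {x : L} {s : Set M} {T : Submodule k M}
    (h : ∀ u ∈ s, ⁅x, u⁆ ∈ T) {u : M} (hu : u ∈ span k s) : ⁅x, u⁆ ∈ T :=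
  (span_le (p := T.comap (LieModule.toEnd k L M x))).2 h hu

variable [LieModule k L N]

def LinearMap.equivariantSubalgebra (f : M →ₗ[k] N) : LieSubalgebra k L where
  carrier := {x | ∀ u, f ⁅x, u⁆ = ⁅x, f u⁆}
  add_mem' hx hy u := by rw [add_lie, add_lie, map_add, hx, hy]
  zero_mem' u := by rw [zero_lie, zero_lie, map_zero]
  smul_mem' t x hx u := by rw [smul_lie, smul_lie, map_smul, hx]
  lie_mem' hx hy u := by
    change ∀ u, _ = _ at hx hy
    simp only [lie_lie, map_sub, hx, hy]

end LieModule

namespace AssocGradedLieAlgebra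

variable {k g V W L : Type*} [Field k] [LieRing g] [LieAlgebra k g]
  [AddCommGroup V] [Module k V] [AddCommGroup W] [Module k W] [LieRing L] [LieAlgebra k L]
  {P : PentadStruct k g V W} (A : AssocGradedLieAlgebra k g V W P L)

theorem ιg_mem_grading_zero (a : g) : A.ιg a ∈ A.grading 0 :=
  A.ιg_range ▸ LinearMap.mem_range_self _ a

theorem lie_mem_of_add_eq {i j n : ℤ} (h : i + j = n) {x y : L} (hx : x ∈ A.grading i)
    (hy : y ∈ A.grading j) : ⁅x, y⁆ ∈ A.grading n :=
  h ▸ A.lie_mem i j x hx y hy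

theorem eq_top_of_grading_le (S : LieSubalgebra k L) (h0 : A.grading 0 ≤ S.toSubmodule)
    (h1 : A.grading 1 ≤ S.toSubmodule) (hm1 : A.grading (-1) ≤ S.toSubmodule) : S = ⊤ := by
  have hpos : ∀ n, 1 ≤ n → A.grading n ≤ S.toSubmodule := by
    intro n hn
    induction n, hn using Int.leInduction with
    | base => exact h1
    | succ n hn ih =>
      rw [A.span_pos n hn, Submodule.span_le]
      rintro _ ⟨x, hx, y, hy, rfl⟩
      exact S.lie_mem (h1 hx) (ih hy)
  have hneg : ∀ n, n ≤ -1 → A.grading n ≤ S.toSubmodule := by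
    intro n hn
    induction n, hn using Int.leInductionDown with
    | base => exact hm1
    | pred n hn ih =>
      rw [show n - 1 = -(-n) - 1 by ring, A.span_neg (-n) (by omega), Submodule.span_le]
      rintro _ ⟨x, hx, y, hy, rfl⟩
      rw [neg_neg] at hy
      exact S.lie_mem (hm1 hx) (ih hy)
  rw [← LieSubalgebra.toSubmodule_eq_top, eq_top_iff, ← A.isInternal.submodule_iSup_eq_top]
  refine iSup_le fun n => ?_
  rcases lt_trichotomy n 0 with hn | rfl | hn
  exacts [hneg n (by omega), h0, hpos n hn]

end AssocGradedLieAlgebra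

namespace PositiveExtension

variable {k g V W L M N : Type*} [Field k] [LieRing g] [LieAlgebra k g]
  [AddCommGroup V] [Module k V] [AddCommGroup W] [Module k W] [LieRing L] [LieAlgebra k L]
  [AddCommGroup M] [Module k M] [LieRingModule L M] [LieModule k L M]
  [AddCommGroup N] [Module k N] [LieRingModule L N] [LieModule k L N]
  {P : PentadStruct k g V W} {A : AssocGradedLieAlgebra k g V W P L}
  (E : PositiveExtension k g V W P L A M) (F : PositiveExtension k g V W P L A N)

theorem lie_mem_of_add_eq {i j n : ℤ} (h : i + j = n) {x : L} {u : M}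
    (hx : x ∈ A.grading i) (hu : u ∈ E.grading j) : ⁅x, u⁆ ∈ E.grading n :=
  h ▸ E.lie_mem i j x hx u hu

theorem lie_eq_zero_of_mem_grading_neg_one {y : L} (hy : y ∈ A.grading (-1)) {u : M}
    (hu : u ∈ E.grading 0) : ⁅y, u⁆ = 0 := by
  have h := E.lie_mem_of_add_eq (add_zero (-1)) hy hu
  rwa [E.zero_of_neg (-1) (by norm_num), Submodule.mem_bot] at h

def prod : PositiveExtension k g V W P L A (M × N) where
  grading n := (E.grading n).prod (F.grading n)
  isInternal := E.isInternal.submodule_prod F.isInternal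
  zero_of_neg n hn := by rw [E.zero_of_neg n hn, F.zero_of_neg n hn, Submodule.prod_bot]
  lie_mem n m x hx u hu := ⟨E.lie_mem n m x hx u.1 hu.1, F.lie_mem n m x hx u.2 hu.2⟩
  transitive m hm u hu h :=
    Prod.ext (E.transitive m hm u.1 hu.1 fun y hy => congrArg Prod.fst (h y hy))
      (F.transitive m hm u.2 hu.2 fun y hy => congrArg Prod.snd (h y hy))
  span_step m hm := by
    refine le_antisymm ?_ (Submodule.span_le.2 ?_)
    · have hl : (E.grading (m + 1)).map (LinearMap.inl k M N) ≤ Submodule.span k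
          {w | ∃ x ∈ A.grading 1, ∃ u ∈ (E.grading m).prod (F.grading m), w = ⁅x, u⁆} := by
        rw [E.span_step m hm,
          Submodule.map_span_lie _ _ _ fun x u => Prod.ext rfl (lie_zero x).symm]
        exact Submodule.span_mono fun _ ⟨x, hx, w, hw, hxw⟩ =>
          ⟨x, hx, w, (Submodule.map_inl _).trans_le (Submodule.prod_mono le_rfl bot_le) hw, hxw⟩
      have hr : (F.grading (m + 1)).map (LinearMap.inr k M N) ≤ Submodule.span k
          {w | ∃ x ∈ A.grading 1, ∃ u ∈ (E.grading m).prod (F.grading m), w = ⁅x, u⁆} := by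
        rw [F.span_step m hm,
          Submodule.map_span_lie _ _ _ fun x u => Prod.ext (lie_zero x).symm rfl]
        exact Submodule.span_mono fun _ ⟨x, hx, w, hw, hxw⟩ =>
          ⟨x, hx, w, (Submodule.map_inr _).trans_le (Submodule.prod_mono bot_le le_rfl) hw, hxw⟩
      calc (E.grading (m + 1)).prod (F.grading (m + 1))
          = (E.grading (m + 1)).map (LinearMap.inl k M N) ⊔
            (F.grading (m + 1)).map (LinearMap.inr k M N) := by simp
        _ ≤ _ := sup_le hl hr
    · rintro _ ⟨x, hx, u, hu, rfl⟩
      exact ⟨E.lie_mem_of_add_eq (add_comm 1 m) hx hu.1, F.lie_mem_of_add_eq (add_comm 1 m) hx hu.2⟩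

variable {E F}

def IsEquivariant (e : E.grading 0 ≃ₗ[k] F.grading 0) : Prop :=
  ∀ (a : g) (u : E.grading 0) (h : ⁅A.ιg a, (u : M)⁆ ∈ E.grading 0),
    (e ⟨⁅A.ιg a, (u : M)⁆, h⟩ : N) = ⁅A.ιg a, (e u : N)⁆

variable (e : E.grading 0 ≃ₗ[k] F.grading 0)

/-- The graph of the degree-`n` component of the isomorphism extending `e`. -/
noncomputable def graph (n : ℤ) : Submodule k (M × N) :=
  if n = 0 then
    LinearMap.range ((E.grading 0).subtype.prod ((F.grading 0).subtype ∘ₗ e.toLinearMap))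
  else if 0 < n then Submodule.span k {p | ∃ x ∈ A.grading 1, ∃ q ∈ graph (n - 1), p = ⁅x, q⁆}
  else ⊥
termination_by n.toNat
decreasing_by omega

theorem graph_zero : graph e 0 =
    LinearMap.range ((E.grading 0).subtype.prod ((F.grading 0).subtype ∘ₗ e.toLinearMap)) := by
  rw [graph, if_pos rfl]

theorem mem_graph_zero {p : M × N} :
    p ∈ graph e 0 ↔ ∃ u : E.grading 0, ((u : M), (e u : N)) = p := by
  rw [graph_zero]
  rfl

theorem graph_add_one {n : ℤ} (hn : 0 ≤ n) : graph e (n + 1) =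
    Submodule.span k {p | ∃ x ∈ A.grading 1, ∃ q ∈ graph e n, p = ⁅x, q⁆} := by
  rw [graph, if_neg (by omega), if_pos (by omega), add_sub_cancel_right]

theorem graph_of_neg {n : ℤ} (hn : n < 0) : graph e n = ⊥ := by
  rw [graph, if_neg (by omega), if_neg (by omega)]

theorem eq_zero_of_mem_graph_of_neg {n : ℤ} (hn : n < 0) {p : M × N} (hp : p ∈ graph e n) :
    p = 0 := by
  rwa [graph_of_neg e hn, Submodule.mem_bot] at hp

theorem map_fst_graph (n : ℤ) : (graph e n).map (LinearMap.fst k M N) = E.grading n := by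
  rcases lt_or_ge n 0 with hn | hn
  · rw [graph_of_neg e hn, Submodule.map_bot, E.zero_of_neg n hn]
  induction n, hn using Int.leInduction with
  | base => rw [graph_zero, ← LinearMap.range_comp, LinearMap.fst_prod, Submodule.range_subtype]
  | succ n hn ih =>
    rw [graph_add_one e hn, Submodule.map_span_lie _ _ _ fun _ _ => rfl, ih, E.span_step n hn]

theorem map_snd_graph (n : ℤ) : (graph e n).map (LinearMap.snd k M N) = F.grading n := by
  rcases lt_or_ge n 0 with hn | hn
  · rw [graph_of_neg e hn, Submodule.map_bot, F.zero_of_neg n hn]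
  induction n, hn using Int.leInduction with
  | base =>
    rw [graph_zero, ← LinearMap.range_comp, LinearMap.snd_prod, LinearMap.range_comp,
      LinearEquiv.range, Submodule.map_top, Submodule.range_subtype]
  | succ n hn ih =>
    rw [graph_add_one e hn, Submodule.map_span_lie _ _ _ fun _ _ => rfl, ih, F.span_step n hn]

theorem lie_mem_graph_of_mem_grading_one {x : L} (hx : x ∈ A.grading 1) {n : ℤ} {p : M × N}
    (hp : p ∈ graph e n) : ⁅x, p⁆ ∈ graph e (n + 1) := by
  rcases lt_or_ge n 0 with hn | hn
  · rw [eq_zero_of_mem_graph_of_neg e hn hp, lie_zero]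
    exact zero_mem _
  rw [graph_add_one e hn]
  exact Submodule.subset_span ⟨x, hx, p, hp, rfl⟩

variable {e}

theorem lie_mem_graph_of_mem_grading_zero (he : IsEquivariant e) {x : L}
    (hx : x ∈ A.grading 0) {n : ℤ} {p : M × N} (hp : p ∈ graph e n) : ⁅x, p⁆ ∈ graph e n := by
  rcases lt_or_ge n 0 with hn | hn
  · rw [eq_zero_of_mem_graph_of_neg e hn hp, lie_zero]
    exact zero_mem _
  induction n, hn using Int.leInduction generalizing p with
  | base =>
    rw [← A.ιg_range] at hx
    obtain ⟨a, rfl⟩ := hx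
    obtain ⟨u, rfl⟩ := (mem_graph_zero e).1 hp
    have h := E.lie_mem_of_add_eq (zero_add 0) (A.ιg_mem_grading_zero a) u.2
    exact (mem_graph_zero e).2 ⟨⟨_, h⟩, Prod.ext rfl (he a u h)⟩
  | succ n hn ih =>
    rw [graph_add_one e hn] at hp ⊢
    refine Submodule.lie_mem_of_mem_span ?_ hp
    rintro _ ⟨y, hy, q, hq, rfl⟩
    rw [leibniz_lie]
    exact add_mem (Submodule.subset_span ⟨_, A.lie_mem_of_add_eq (zero_add 1) hx hy, q, hq, rfl⟩)
      (Submodule.subset_span ⟨y, hy, _, ih hq, rfl⟩)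

theorem lie_mem_graph_of_mem_grading_neg_one (he : IsEquivariant e) {y : L}
    (hy : y ∈ A.grading (-1)) {n : ℤ} {p : M × N} (hp : p ∈ graph e n) :
    ⁅y, p⁆ ∈ graph e (n - 1) := by
  rcases lt_or_ge n 0 with hn | hn
  · rw [eq_zero_of_mem_graph_of_neg e hn hp, lie_zero]
    exact zero_mem _
  induction n, hn using Int.leInduction generalizing p with
  | base =>
    obtain ⟨u, rfl⟩ := (mem_graph_zero e).1 hp
    have h : ⁅y, ((u : M), (e u : N))⁆ = 0 := Prod.ext
      (E.lie_eq_zero_of_mem_grading_neg_one hy u.2) (F.lie_eq_zero_of_mem_grading_neg_one hy (e u).2)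
    rw [h]
    exact zero_mem _
  | succ n hn ih =>
    rw [graph_add_one e hn] at hp
    rw [add_sub_cancel_right]
    refine Submodule.lie_mem_of_mem_span ?_ hp
    rintro _ ⟨x, hx, q, hq, rfl⟩
    rw [leibniz_lie]
    exact add_mem
      (lie_mem_graph_of_mem_grading_zero he (A.lie_mem_of_add_eq (neg_add_cancel 1) hy hx) hq)
      (sub_add_cancel n 1 ▸ lie_mem_graph_of_mem_grading_one e hx (ih hq))

theorem fst_eq_zero_iff_snd_eq_zero (he : IsEquivariant e) {n : ℤ} {p : M × N}
    (hp : p ∈ graph e n) : p.1 = 0 ↔ p.2 = 0 := by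
  rcases lt_or_ge n 0 with hn | hn
  · simp [eq_zero_of_mem_graph_of_neg e hn hp]
  induction n, hn using Int.leInduction generalizing p with
  | base =>
    obtain ⟨u, rfl⟩ := (mem_graph_zero e).1 hp
    simp
  | succ n hn ih =>
    have hlower : ∀ y ∈ A.grading (-1), ⁅y, p⁆ ∈ graph e n := fun y hy => by
      simpa using lie_mem_graph_of_mem_grading_neg_one he hy hp
    have h₁ : p.1 ∈ E.grading (n + 1) := map_fst_graph e (n + 1) ▸ Submodule.mem_map_of_mem hp
    have h₂ : p.2 ∈ F.grading (n + 1) := map_snd_graph e (n + 1) ▸ Submodule.mem_map_of_mem hp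
    constructor
    · intro hp₁
      refine F.transitive (n + 1) (by omega) p.2 h₂ fun y hy => (ih (hlower y hy)).1 ?_
      change ⁅y, p.1⁆ = 0
      rw [hp₁, lie_zero]
    · intro hp₂
      refine E.transitive (n + 1) (by omega) p.1 h₁ fun y hy => (ih (hlower y hy)).2 ?_
      change ⁅y, p.2⁆ = 0
      rw [hp₂, lie_zero]

noncomputable def gradedEquiv (he : IsEquivariant e) (n : ℤ) : E.grading n ≃ₗ[k] F.grading n :=
  (LinearEquiv.ofEq _ _ (map_fst_graph e n).symm).trans
    (((graph e n).graphEquiv fun _ => fst_eq_zero_iff_snd_eq_zero he).trans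
      (LinearEquiv.ofEq _ _ (map_snd_graph e n)))

theorem gradedEquiv_apply (he : IsEquivariant e) {n : ℤ} {u : M} {v : N}
    (huv : (u, v) ∈ graph e n) (hu : u ∈ E.grading n) : (gradedEquiv he n ⟨u, hu⟩ : N) = v :=
  Submodule.graphEquiv_apply (fun _ => fst_eq_zero_iff_snd_eq_zero he) huv _

noncomputable def extendEquiv (he : IsEquivariant e) : M ≃ₗ[k] N :=
  E.isInternal.linearEquiv F.isInternal (gradedEquiv he)

theorem extendEquiv_apply_of_mem_graph (he : IsEquivariant e) {n : ℤ} {u : M} {v : N}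
    (huv : (u, v) ∈ graph e n) : extendEquiv he u = v := by
  have hu : u ∈ E.grading n := map_fst_graph e n ▸ Submodule.mem_map_of_mem huv
  exact (E.isInternal.linearEquiv_apply_coe F.isInternal _ n ⟨u, hu⟩).trans
    (gradedEquiv_apply he huv hu)

theorem mk_extendEquiv_mem_graph (he : IsEquivariant e) {n : ℤ} {u : M} (hu : u ∈ E.grading n) :
    (u, extendEquiv he u) ∈ graph e n := by
  rw [← map_fst_graph e n] at hu
  obtain ⟨p, hp, rfl⟩ := hu
  rw [LinearMap.fst_apply, extendEquiv_apply_of_mem_graph he (u := p.1) (v := p.2) hp]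
  exact hp

theorem extendEquiv_lie (he : IsEquivariant e) {x : L} {d : ℤ}
    (hx : ∀ n, ∀ p ∈ graph e n, ⁅x, p⁆ ∈ graph e (n + d)) (u : M) :
    extendEquiv he ⁅x, u⁆ = ⁅x, extendEquiv he u⁆ := by
  suffices (extendEquiv he).toLinearMap ∘ₗ LieModule.toEnd k L M x =
      LieModule.toEnd k L N x ∘ₗ (extendEquiv he).toLinearMap from LinearMap.congr_fun this u
  refine LinearMap.ext_on (s := ⋃ n, (E.grading n : Set M)) ?_ fun u hu => ?_
  · rw [← Submodule.iSup_eq_span, E.isInternal.submodule_iSup_eq_top]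
  · obtain ⟨n, hn⟩ := Set.mem_iUnion.1 hu
    exact extendEquiv_apply_of_mem_graph he (hx n _ (mk_extendEquiv_mem_graph he hn))

theorem exists_equivariant_linearEquiv (he : IsEquivariant e) :
    ∃ f : M ≃ₗ[k] N, ∀ (x : L) (u : M), f ⁅x, u⁆ = ⁅x, f u⁆ := by
  refine ⟨extendEquiv he, fun x => ?_⟩
  have htop : (extendEquiv he).toLinearMap.equivariantSubalgebra (L := L) = ⊤ :=
    A.eq_top_of_grading_le _
      (fun x hx => extendEquiv_lie he (d := 0) fun n p hp => by
        simpa using lie_mem_graph_of_mem_grading_zero he hx hp)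
      (fun x hx => extendEquiv_lie he fun n p hp => lie_mem_graph_of_mem_grading_one e hx hp)
      (fun x hx => extendEquiv_lie he (d := -1) fun n p hp => by
        simpa [← sub_eq_add_neg] using lie_mem_graph_of_mem_grading_neg_one he hx hp)
  exact (htop ▸ LieSubalgebra.mem_top x :
    x ∈ (extendEquiv he).toLinearMap.equivariantSubalgebra)

end PositiveExtension

/-- Let `(g,ρ,V,𝒱,B₀)` be a standard pentad and let `U`, `W'` be
`g`-modules.  Then the positive extension of `U ⊕ W'` with respect to the pentad is isomorphic
as an `L(g,ρ,V,𝒱,B₀)`-module to the direct sum of the positive extensions of `U` and of `W'`.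
(The `g`-modules here are realized as the degree-zero parts of the respective positive
extensions; the hypothesis `e` says that the degree-zero part of `MUW` is the direct sum of
those of `MU` and `MW`.) -/
theorem statement17
    {k g V W L MU MW MUW : Type*} [Field k] [LieRing g] [LieAlgebra k g]
    [AddCommGroup V] [Module k V] [AddCommGroup W] [Module k W]
    [LieRing L] [LieAlgebra k L]
    [AddCommGroup MU] [Module k MU] [LieRingModule L MU] [LieModule k L MU]
    [AddCommGroup MW] [Module k MW] [LieRingModule L MW] [LieModule k L MW]
    [AddCommGroup MUW] [Module k MUW] [LieRingModule L MUW] [LieModule k L MUW]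
    (P : PentadStruct k g V W)
    (A : AssocGradedLieAlgebra k g V W P L)
    -- positive extensions of `U`, `W'` and of `U ⊕ W'`:
    (EU : PositiveExtension k g V W P L A MU)
    (EW : PositiveExtension k g V W P L A MW)
    (EUW : PositiveExtension k g V W P L A MUW)
    -- the degree-zero part of `MUW` is, `g`-equivariantly, the direct sum of those of
    -- `MU` and `MW`:
    (e : ↥(EUW.grading 0) ≃ₗ[k] ↥(EU.grading 0) × ↥(EW.grading 0))
    (he : ∀ (a : g) (u : EUW.grading 0) (h : ⁅A.ιg a, (u : MUW)⁆ ∈ EUW.grading 0),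
      (((e ⟨⁅A.ιg a, (u : MUW)⁆, h⟩).1 : MU), ((e ⟨⁅A.ιg a, (u : MUW)⁆, h⟩).2 : MW))
        = (⁅A.ιg a, ((e u).1 : MU)⁆, ⁅A.ιg a, ((e u).2 : MW)⁆)) :
    ∃ f : MUW ≃ₗ[k] MU × MW,
      ∀ (x : L) (u : MUW), f ⁅x, u⁆ = ⁅x, f u⁆ := by
  let e' : EUW.grading 0 ≃ₗ[k] (EU.prod EW).grading 0 :=
    e.trans (Submodule.prodEquiv (EU.grading 0) (EW.grading 0)).symm
  -- `he` is `IsEquivariant e'` up to unfolding, as `EU.prod EW` is graded componentwise.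
  exact PositiveExtension.exists_equivariant_linearEquiv (e := e') he
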